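/- Let j ∈ ℕ and m ∈ ℝ. There exists a constant C > 0 such that for all u ∈ C^{j+2}(ℝ^N, ℂ), sup_{|β|=j+1} ‖⟨x⟩^m D^β u‖_{L^∞} ≤ C ( sup_{|β|=j} ‖⟨x⟩^m D^β u‖_{L^∞} + sup_{|β|=j+2} ‖⟨x⟩^m D^β u‖_{L^∞} ). -/

import Mathlib

open MeasureTheory Complex
open scoped BigOperators ENNReal NNReal SchwartzMap

noncomputable def jb {N : ℕ} (x : EuclideanSpace ℝ (Fin N)) : ℝ :=
  Real.sqrt (1 + ‖x‖ ^ 2)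

noncomputable def Dk {N : ℕ} {F : Type*} [NormedAddCommGroup F] [NormedSpace ℝ F]
    (k : ℕ) (f : EuclideanSpace ℝ (Fin N) → F) (d : Fin k → Fin N)
    (x : EuclideanSpace ℝ (Fin N)) : F :=
  iteratedFDeriv ℝ k f x (fun i => EuclideanSpace.single (d i) 1)

noncomputable def lap {N : ℕ} {F : Type*} [NormedAddCommGroup F] [NormedSpace ℝ F]
    (f : EuclideanSpace ℝ (Fin N) → F) (x : EuclideanSpace ℝ (Fin N)) : F :=
  ∑ i : Fin N, iteratedFDeriv ℝ 2 f x (fun _ => EuclideanSpace.single i 1)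

noncomputable def gradNorm {N : ℕ} (f : EuclideanSpace ℝ (Fin N) → ℂ)
    (x : EuclideanSpace ℝ (Fin N)) : ℝ :=
  Real.sqrt (∑ i : Fin N, ‖fderiv ℝ f x (EuclideanSpace.single i 1)‖ ^ 2)

/-!
A derivative of order `j + 1` is `∂ᵢ` of one of order `j`; restrict the latter to the segment
`s ↦ x + s eᵢ`, `s ∈ [0, 1]`. For a twice differentiable `g : ℝ → E`, two applications of the
mean value theorem give `‖g' 0‖ ≤ ‖g 0‖ + ‖g 1‖ + sup_{[0,1]} ‖g''‖`. Along a segment of length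
one the weight varies by a bounded factor, `⟨x⟩ ≤ √3 ⟨y⟩` when `‖x - y‖ ≤ 1`, so the inequality
holds with `C = 2 √3 ^ |m|`.
-/
open Set

theorem norm_deriv_zero_le_of_hasDerivWithinAt_Icc {E : Type*} [NormedAddCommGroup E]
    [NormedSpace ℝ E] {f f' f'' : ℝ → E} {M : ℝ}
    (hf : ∀ t ∈ Icc (0 : ℝ) 1, HasDerivWithinAt f (f' t) (Icc 0 1) t)
    (hf' : ∀ t ∈ Icc (0 : ℝ) 1, HasDerivWithinAt f' (f'' t) (Icc 0 1) t)
    (hM : ∀ t ∈ Icc (0 : ℝ) 1, ‖f'' t‖ ≤ M) :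
    ‖f' 0‖ ≤ ‖f 0‖ + ‖f 1‖ + M := by
  have h0 : (0 : ℝ) ∈ Icc 0 1 := left_mem_Icc.mpr zero_le_one
  have h1 : (1 : ℝ) ∈ Icc 0 1 := right_mem_Icc.mpr zero_le_one
  have hM0 : 0 ≤ M := (norm_nonneg _).trans (hM 0 h0)
  have hincr : ∀ t ∈ Icc (0 : ℝ) 1, ‖f' t - f' 0‖ ≤ M := fun t ht =>
    calc ‖f' t - f' 0‖ ≤ M * ‖t - 0‖ :=
          (convex_Icc 0 1).norm_image_sub_le_of_norm_hasDerivWithin_le hf' hM h0 ht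
      _ ≤ M * 1 := by
          gcongr
          rw [sub_zero, Real.norm_of_nonneg ht.1]
          exact ht.2
      _ = M := mul_one M
  -- the remainder `f 1 - f 0 - f' 0` is the increment of `s ↦ f s - s • f' 0`
  have hrem : ‖f 1 - f 0 - f' 0‖ ≤ M := by
    have hg : ∀ t ∈ Icc (0 : ℝ) 1,
        HasDerivWithinAt (fun s => f s - s • f' 0) (f' t - f' 0) (Icc 0 1) t := fun t ht =>
      ((hf t ht).sub ((hasDerivWithinAt_id t _).smul_const (f' 0))).congr_deriv (by rw [one_smul])
    have := (convex_Icc 0 1).norm_image_sub_le_of_norm_hasDerivWithin_le hg hincr h0 h1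
    simpa [sub_sub, add_comm] using this
  calc ‖f' 0‖ = ‖(f 1 - f 0) - (f 1 - f 0 - f' 0)‖ := by rw [sub_sub_cancel]
    _ ≤ ‖f 1‖ + ‖f 0‖ + M := (norm_sub_le _ _).trans (add_le_add (norm_sub_le _ _) hrem)
    _ = ‖f 0‖ + ‖f 1‖ + M := by ring

theorem Real.rpow_le_mul_rpow_of_le_mul {a b c : ℝ} (ha : 0 < a) (hb : 0 < b)
    (hab : a ≤ c * b) (hba : b ≤ c * a) (m : ℝ) : a ^ m ≤ c ^ |m| * b ^ m := by
  have hc : 0 < c := pos_of_mul_pos_left (ha.trans_le hab) hb.le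
  rcases le_or_gt 0 m with hm | hm
  · rw [abs_of_nonneg hm, ← Real.mul_rpow hc.le hb.le]
    exact Real.rpow_le_rpow ha.le hab hm
  · have hca : c ^ m * a ^ m ≤ b ^ m := by
      rw [← Real.mul_rpow hc.le ha.le]
      exact Real.rpow_le_rpow_of_nonpos hb hba hm.le
    calc a ^ m = c ^ (-m) * (c ^ m * a ^ m) := by
          rw [← mul_assoc, ← Real.rpow_add hc, neg_add_cancel, Real.rpow_zero, one_mul]
      _ ≤ c ^ |m| * b ^ m := by
          rw [abs_of_neg hm]
          gcongr

section Weighted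

variable {N : ℕ} {F : Type*} [NormedAddCommGroup F] [NormedSpace ℝ F]

lemma one_le_jb (x : EuclideanSpace ℝ (Fin N)) : 1 ≤ jb x :=
  Real.one_le_sqrt.mpr (le_add_of_nonneg_right (sq_nonneg _))

lemma jb_pos (x : EuclideanSpace ℝ (Fin N)) : 0 < jb x :=
  one_pos.trans_le (one_le_jb x)

lemma jb_le_sqrt_three_mul_jb {x y : EuclideanSpace ℝ (Fin N)} (h : ‖y - x‖ ≤ 1) :
    jb x ≤ Real.sqrt 3 * jb y := by
  rw [jb, jb, ← Real.sqrt_mul (by norm_num : (0:ℝ) ≤ 3)]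
  apply Real.sqrt_le_sqrt
  have hx : ‖x‖ ≤ ‖y‖ + 1 := by
    have := norm_sub_norm_le x y
    rw [norm_sub_rev] at this
    linarith
  nlinarith [mul_self_le_mul_self (norm_nonneg x) hx, sq_nonneg (‖y‖ - 1)]

lemma jb_rpow_le {x y : EuclideanSpace ℝ (Fin N)} (h : ‖y - x‖ ≤ 1) (m : ℝ) :
    jb x ^ m ≤ Real.sqrt 3 ^ |m| * jb y ^ m :=
  Real.rpow_le_mul_rpow_of_le_mul (jb_pos x) (jb_pos y) (jb_le_sqrt_three_mul_jb h)
    (jb_le_sqrt_three_mul_jb (by rwa [norm_sub_rev])) m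

lemma hasDerivAt_Dk_add_smul_single {n : ℕ} {f : EuclideanSpace ℝ (Fin N) → F}
    (hf : ContDiff ℝ (n + 1) f) (d : Fin n → Fin N) (i : Fin N)
    (x : EuclideanSpace ℝ (Fin N)) (t : ℝ) :
    HasDerivAt (fun s : ℝ => Dk n f d (x + s • EuclideanSpace.single i 1))
      (Dk (n + 1) f (Fin.cons i d) (x + t • EuclideanSpace.single i 1)) t := by
  set e : EuclideanSpace ℝ (Fin N) := EuclideanSpace.single i 1
  have hline : HasDerivAt (fun s : ℝ => x + s • e) e t := by
    simpa using ((hasDerivAt_id t).smul_const e).const_add x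
  have hD : HasFDerivAt (iteratedFDeriv ℝ n f)
      (fderiv ℝ (iteratedFDeriv ℝ n f) (x + t • e)) (x + t • e) :=
    ((hf.iteratedFDeriv_right (add_comm _ _).le).differentiable one_ne_zero _).hasFDerivAt
  have := (ContinuousMultilinearMap.apply ℝ (fun _ : Fin n => EuclideanSpace ℝ (Fin N)) F
      (fun k => EuclideanSpace.single (d k) 1)).hasFDerivAt.comp_hasDerivAt t
    (hD.comp_hasDerivAt t hline)
  refine this.congr_deriv ?_
  rw [Dk, iteratedFDeriv_succ_apply_left]
  rfl

noncomputable def weightedSup (m : ℝ) (k : ℕ) (u : EuclideanSpace ℝ (Fin N) → F) : ℝ≥0∞ :=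
  ⨆ d : Fin k → Fin N, ⨆ x, ENNReal.ofReal (jb x ^ m) * ‖Dk k u d x‖₊

lemma ofReal_jb_rpow_mul_le_weightedSup (m : ℝ) (k : ℕ) (u : EuclideanSpace ℝ (Fin N) → F)
    (d : Fin k → Fin N) (x : EuclideanSpace ℝ (Fin N)) :
    ENNReal.ofReal (jb x ^ m * ‖Dk k u d x‖) ≤ weightedSup m k u := by
  rw [ENNReal.ofReal_mul (Real.rpow_nonneg (jb_pos x).le m), ofReal_norm, enorm_eq_nnnorm]
  exact le_iSup_of_le d (le_iSup_of_le x le_rfl)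

lemma jb_rpow_mul_norm_le_toReal_weightedSup {m : ℝ} {k : ℕ} {u : EuclideanSpace ℝ (Fin N) → F}
    (h : weightedSup m k u ≠ ⊤) (d : Fin k → Fin N) (x : EuclideanSpace ℝ (Fin N)) :
    jb x ^ m * ‖Dk k u d x‖ ≤ (weightedSup m k u).toReal :=
  (ENNReal.ofReal_le_iff_le_toReal h).mp (ofReal_jb_rpow_mul_le_weightedSup m k u d x)

lemma weightedSup_le_ofReal {m c : ℝ} {k : ℕ} {u : EuclideanSpace ℝ (Fin N) → F}
    (h : ∀ d x, jb x ^ m * ‖Dk k u d x‖ ≤ c) : weightedSup m k u ≤ ENNReal.ofReal c :=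
  iSup₂_le fun d x => by
    rw [← enorm_eq_nnnorm, ← ofReal_norm, ← ENNReal.ofReal_mul (Real.rpow_nonneg (jb_pos x).le m)]
    exact ENNReal.ofReal_le_ofReal (h d x)

lemma jb_rpow_mul_norm_Dk_succ_le {m a b : ℝ} {n : ℕ} {u : EuclideanSpace ℝ (Fin N) → F}
    (hu : ContDiff ℝ (n + 2) u) (ha : ∀ d x, jb x ^ m * ‖Dk n u d x‖ ≤ a)
    (hb : ∀ d x, jb x ^ m * ‖Dk (n + 2) u d x‖ ≤ b) (d : Fin (n + 1) → Fin N)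
    (x : EuclideanSpace ℝ (Fin N)) :
    jb x ^ m * ‖Dk (n + 1) u d x‖ ≤ Real.sqrt 3 ^ |m| * (2 * a + b) := by
  set e : EuclideanSpace ℝ (Fin N) := EuclideanSpace.single (d 0) 1
  set w := jb x ^ m
  set c := Real.sqrt 3 ^ |m|
  have hw : 0 < w := Real.rpow_pos_of_pos (jb_pos x) m
  have hc : 0 ≤ c := Real.rpow_nonneg (Real.sqrt_nonneg 3) _
  have hweight : ∀ t ∈ Icc (0 : ℝ) 1, ∀ (v : F) {r : ℝ},
      jb (x + t • e) ^ m * ‖v‖ ≤ r → ‖v‖ ≤ c * r / w := by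
    intro t ht v r hr
    have hdist : ‖x + t • e - x‖ ≤ 1 := by
      simpa [e, norm_smul, abs_of_nonneg ht.1] using ht.2
    rw [le_div_iff₀ hw]
    calc ‖v‖ * w ≤ ‖v‖ * (c * jb (x + t • e) ^ m) := by gcongr; exact jb_rpow_le hdist m
      _ = c * (jb (x + t • e) ^ m * ‖v‖) := by ring
      _ ≤ c * r := by gcongr
  have hderiv (t : ℝ) :=
    hasDerivAt_Dk_add_smul_single (hu.of_le (by gcongr; norm_num)) (Fin.tail d) (d 0) x t
  have hderiv2 (t : ℝ) := hasDerivAt_Dk_add_smul_single (n := n + 1)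
    (hu.of_le (le_of_eq (by push_cast; ring))) d (d 0) x t
  rw [Fin.cons_self_tail] at hderiv
  have htaylor := norm_deriv_zero_le_of_hasDerivWithinAt_Icc
    (fun t _ => (hderiv t).hasDerivWithinAt) (fun t _ => (hderiv2 t).hasDerivWithinAt)
    (fun t ht => hweight t ht _ (hb _ _))
  have h0 := hweight 0 (left_mem_Icc.mpr zero_le_one) _ (ha (Fin.tail d) (x + (0 : ℝ) • e))
  have h1 := hweight 1 (right_mem_Icc.mpr zero_le_one) _ (ha (Fin.tail d) (x + (1 : ℝ) • e))
  have hbound : ‖Dk (n + 1) u d x‖ ≤ c * a / w + c * a / w + c * b / w := by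
    simpa using htaylor.trans (add_le_add_left (add_le_add h0 h1) _)
  calc w * ‖Dk (n + 1) u d x‖ ≤ w * (c * a / w + c * a / w + c * b / w) := by gcongr
    _ = c * (2 * a + b) := by field_simp; ring

end Weighted

theorem stmt5_general (N : ℕ) (j : ℕ) (m : ℝ) :
    ∃ C : ℝ≥0∞, 0 < C ∧ C < ⊤ ∧
      ∀ u : EuclideanSpace ℝ (Fin N) → ℂ, ContDiff ℝ (j + 2) u →
        (⨆ d : Fin (j + 1) → Fin N, ⨆ x, ENNReal.ofReal (jb x ^ m) * ‖Dk (j + 1) u d x‖₊) ≤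
          C * ((⨆ d : Fin j → Fin N, ⨆ x, ENNReal.ofReal (jb x ^ m) * ‖Dk j u d x‖₊)
            + ⨆ d : Fin (j + 2) → Fin N, ⨆ x, ENNReal.ofReal (jb x ^ m) * ‖Dk (j + 2) u d x‖₊) := by
  set c := Real.sqrt 3 ^ |m|
  have hc : 0 < c := Real.rpow_pos_of_pos (by positivity) _
  refine ⟨ENNReal.ofReal (2 * c), ENNReal.ofReal_pos.mpr (by positivity), ENNReal.ofReal_lt_top,
    fun u hu => ?_⟩
  change weightedSup m (j + 1) u ≤ _ * (weightedSup m j u + weightedSup m (j + 2) u)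
  set A := weightedSup m j u
  set B := weightedSup m (j + 2) u
  rcases eq_top_or_lt_top (A + B) with hAB | hAB
  · rw [hAB, ENNReal.mul_top (ENNReal.ofReal_pos.mpr (by positivity)).ne']
    exact le_top
  obtain ⟨hA, hB⟩ := ENNReal.add_lt_top.mp hAB
  calc weightedSup m (j + 1) u ≤ ENNReal.ofReal (c * (2 * A.toReal + B.toReal)) :=
        weightedSup_le_ofReal (jb_rpow_mul_norm_Dk_succ_le hu
          (jb_rpow_mul_norm_le_toReal_weightedSup hA.ne)
          (jb_rpow_mul_norm_le_toReal_weightedSup hB.ne))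
    _ ≤ ENNReal.ofReal (2 * c) * ENNReal.ofReal (A.toReal + B.toReal) := by
        rw [← ENNReal.ofReal_mul (by positivity)]
        apply ENNReal.ofReal_le_ofReal
        nlinarith [ENNReal.toReal_nonneg (a := B)]
    _ = ENNReal.ofReal (2 * c) * (A + B) := by
        rw [ENNReal.ofReal_add ENNReal.toReal_nonneg ENNReal.toReal_nonneg,
          ENNReal.ofReal_toReal hA.ne, ENNReal.ofReal_toReal hB.ne]

/-- Weighted L^∞ interpolation inequality for derivatives of order j+1. -/
theorem stmt5 (N : ℕ) (hN : 0 < N) (j : ℕ) (m : ℝ) :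
    ∃ C : ℝ≥0∞, 0 < C ∧ C < ⊤ ∧
      ∀ u : EuclideanSpace ℝ (Fin N) → ℂ, ContDiff ℝ (j + 2) u →
        (⨆ d : Fin (j + 1) → Fin N, ⨆ x, ENNReal.ofReal (jb x ^ m) * ‖Dk (j + 1) u d x‖₊) ≤
          C * ((⨆ d : Fin j → Fin N, ⨆ x, ENNReal.ofReal (jb x ^ m) * ‖Dk j u d x‖₊)
            + ⨆ d : Fin (j + 2) → Fin N, ⨆ x, ENNReal.ofReal (jb x ^ m) * ‖Dk (j + 2) u d x‖₊) :=
  stmt5_general N j m
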